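/- Suppose t, s ∈ ℝ satisfy A(t,s) > 4 r e^{s+t}. Then (∂²φ/∂s∂t)(t,s) = 16 r e^{2s+2t} [ (a cos β − r)(e^{2s+2t} + d₂²) + (a cos β + r)(e^{2t} + d₁² e^{2s}) ] / (A(t,s)² − 16 r² e^{2s+2t})^{3/2}. -/

import Mathlib

open Real

noncomputable section

/-- Inverse hyperbolic cosine. -/
def arcosh (x : ℝ) : ℝ := Real.log (x + Real.sqrt (x ^ 2 - 1))

/-- `d₁ = √(a² + r² − 2ar cos β)`. -/
def d1 (a r β : ℝ) : ℝ := Real.sqrt (a ^ 2 + r ^ 2 - 2 * a * r * Real.cos β)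

/-- `d₂ = √(a² + r² + 2ar cos β)`. -/
def d2 (a r β : ℝ) : ℝ := Real.sqrt (a ^ 2 + r ^ 2 + 2 * a * r * Real.cos β)

/-- `A(t,s) = e^{2s+2t} + e^{2t} + d₁² e^{2s} + d₂²`. -/
def Afun (a r β t s : ℝ) : ℝ :=
  Real.exp (2 * s + 2 * t) + Real.exp (2 * t) + d1 a r β ^ 2 * Real.exp (2 * s) +
    d2 a r β ^ 2

/-- `φ(t,s) = arcosh(A(t,s)/(4 r e^{s+t}))`, the lifted distance function. -/
def phi (a r β t s : ℝ) : ℝ := _root_.arcosh (Afun a r β t s / (4 * r * Real.exp (s + t)))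

/-
Because `∂ₜ(4 r e^{s+t}) = 4 r e^{s+t}`, the chain rule for `arcosh (A / (4 r e^{s+t}))` gives
`∂ₜφ = (∂ₜA − A) / √(A² − 16 r² e^{2s+2t})`. The hypothesis `A > 4 r e^{s+t}` is open in `s`,
so this formula holds for all `s'` near `s`, and `∂ₛ∂ₜφ` is the derivative of an explicit
quotient. The last step is a polynomial identity in `e^{2s}`, `e^{2t}` once `d₁²` and `d₂²`
are expanded.
-/

theorem arcosh_eq_real_arcosh : _root_.arcosh = Real.arcosh := rfl

theorem HasDerivAt.arcosh_div {f g : ℝ → ℝ} {f' g' x : ℝ} (hf : HasDerivAt f f' x)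
    (hg : HasDerivAt g g' x) (hg₀ : 0 < g x) (hgf : g x < f x) :
    HasDerivAt (fun y => _root_.arcosh (f y / g y))
      ((f' * g x - f x * g') / (g x * √(f x ^ 2 - g x ^ 2))) x := by
  have h1 : 1 < f x / g x := (one_lt_div hg₀).mpr hgf
  have hsq : √((f x / g x) ^ 2 - 1) = √(f x ^ 2 - g x ^ 2) / g x := by
    rw [div_pow, div_sub_one (by positivity), sqrt_div' _ (sq_nonneg _), sqrt_sq hg₀.le]
  have := (Real.hasDerivAt_arcosh h1).comp x (hf.div hg hg₀.ne')
  rw [arcosh_eq_real_arcosh]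
  refine this.congr_deriv ?_
  rw [hsq]
  field_simp

theorem HasDerivAt.div_sqrt {f g : ℝ → ℝ} {f' g' x : ℝ} (hf : HasDerivAt f f' x)
    (hg : HasDerivAt g g' x) (hg₀ : 0 < g x) :
    HasDerivAt (fun y => f y / √(g y)) ((f' * g x - f x * g' / 2) / g x ^ ((3 : ℝ) / 2)) x := by
  have h32 : g x ^ ((3 : ℝ) / 2) = g x * √(g x) := by
    rw [sqrt_eq_rpow, ← rpow_one_add' hg₀.le (by norm_num)]
    norm_num
  have hs : 0 < √(g x) := sqrt_pos.mpr hg₀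
  refine (hf.div (hg.sqrt hg₀.ne') hs.ne').congr_deriv ?_
  rw [h32]
  field_simp
  rw [sq_sqrt hg₀.le]
  ring

theorem d1_sq (a r β : ℝ) : d1 a r β ^ 2 = a ^ 2 + r ^ 2 - 2 * a * r * cos β :=
  sq_sqrt (by nlinarith [sq_nonneg (a - r * cos β), sin_sq_add_cos_sq β, sq_nonneg (r * sin β)])

theorem d2_sq (a r β : ℝ) : d2 a r β ^ 2 = a ^ 2 + r ^ 2 + 2 * a * r * cos β :=
  sq_sqrt (by nlinarith [sq_nonneg (a + r * cos β), sin_sq_add_cos_sq β, sq_nonneg (r * sin β)])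

theorem exp_two_mul_add_two_mul (s t : ℝ) : exp (2 * s + 2 * t) = exp (s + t) ^ 2 := by
  rw [sq, ← exp_add]
  ring_nf

theorem hasDerivAt_Afun_fst (a r β t s : ℝ) :
    HasDerivAt (fun t' => Afun a r β t' s) (2 * exp (2 * s + 2 * t) + 2 * exp (2 * t)) t := by
  have hst := (((hasDerivAt_id t).const_mul 2).const_add (2 * s)).exp
  have ht := ((hasDerivAt_id t).const_mul 2).exp
  refine (((hst.add ht).add_const _).add_const _).congr_deriv ?_
  simp only [id]
  ring

theorem hasDerivAt_Afun_snd (a r β t s : ℝ) :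
    HasDerivAt (Afun a r β t) (2 * exp (2 * s + 2 * t) + 2 * d1 a r β ^ 2 * exp (2 * s)) s := by
  have hst := (((hasDerivAt_id s).const_mul 2).add_const (2 * t)).exp
  have hs := ((hasDerivAt_id s).const_mul 2).exp
  refine (((hst.add_const _).add (hs.const_mul _)).add_const _).congr_deriv ?_
  simp only [id]
  ring

/-- `√phiDisc = 4 r e^{s+t} sinh φ`. -/
def phiDisc (a r β t s : ℝ) : ℝ := Afun a r β t s ^ 2 - 16 * r ^ 2 * exp (2 * s + 2 * t)

theorem phiDisc_pos {a r β t s : ℝ} (hr : 0 < r) (h : 4 * r * exp (s + t) < Afun a r β t s) :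
    0 < phiDisc a r β t s := by
  have hB₀ : 0 < 4 * r * exp (s + t) := by positivity
  rw [phiDisc, exp_two_mul_add_two_mul]
  nlinarith [mul_pos (sub_pos.2 h) (add_pos hB₀ (hB₀.trans h))]

theorem hasDerivAt_phiDisc_snd (a r β t s : ℝ) :
    HasDerivAt (phiDisc a r β t)
      (2 * Afun a r β t s * (2 * exp (2 * s + 2 * t) + 2 * d1 a r β ^ 2 * exp (2 * s))
        - 32 * r ^ 2 * exp (2 * s + 2 * t)) s := by
  have hst := (((hasDerivAt_id s).const_mul 2).add_const (2 * t)).exp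
  refine (((hasDerivAt_Afun_snd a r β t s).pow 2).sub (hst.const_mul _)).congr_deriv ?_
  simp only [id]
  ring

def phiNum (a r β t s : ℝ) : ℝ :=
  exp (2 * s + 2 * t) + exp (2 * t) - d1 a r β ^ 2 * exp (2 * s) - d2 a r β ^ 2

theorem hasDerivAt_phiNum_snd (a r β t s : ℝ) :
    HasDerivAt (phiNum a r β t) (2 * exp (2 * s + 2 * t) - 2 * d1 a r β ^ 2 * exp (2 * s)) s := by
  have hst := (((hasDerivAt_id s).const_mul 2).add_const (2 * t)).exp
  have hs := ((hasDerivAt_id s).const_mul 2).exp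
  refine (((hst.add_const _).sub (hs.const_mul _)).sub_const _).congr_deriv ?_
  simp only [id]
  ring

theorem hasDerivAt_phi_fst {a r β t s : ℝ} (hr : 0 < r)
    (h : 4 * r * exp (s + t) < Afun a r β t s) :
    HasDerivAt (fun t' => phi a r β t' s)
      (phiNum a r β t s / √(phiDisc a r β t s)) t := by
  have hB : HasDerivAt (fun t' => 4 * r * exp (s + t')) (4 * r * exp (s + t)) t := by
    simpa using (((hasDerivAt_id t).const_add s).exp).const_mul (4 * r)
  have hB₀ : 0 < 4 * r * exp (s + t) := by positivity
  refine ((hasDerivAt_Afun_fst a r β t s).arcosh_div hB hB₀ h).congr_deriv ?_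
  have hdisc : Afun a r β t s ^ 2 - (4 * r * exp (s + t)) ^ 2 = phiDisc a r β t s := by
    rw [phiDisc, exp_two_mul_add_two_mul]
    ring
  rw [hdisc, ← sub_mul, mul_comm _ (4 * r * exp (s + t)), mul_div_mul_left _ _ hB₀.ne', Afun,
    phiNum]
  ring

theorem mixed_derivative_phi_formula_general (a r β t s : ℝ) (hr : 0 < r)
    (h : 4 * r * Real.exp (s + t) < Afun a r β t s) :
    deriv (fun s' => deriv (fun t' => phi a r β t' s') t) s =
      16 * r * Real.exp (2 * s + 2 * t) *
          ((a * Real.cos β - r) * (Real.exp (2 * s + 2 * t) + d2 a r β ^ 2) +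
            (a * Real.cos β + r) * (Real.exp (2 * t) + d1 a r β ^ 2 * Real.exp (2 * s))) /
        (Afun a r β t s ^ 2 - 16 * r ^ 2 * Real.exp (2 * s + 2 * t)) ^ ((3 : ℝ) / 2) := by
  have hnear : ∀ᶠ s' in nhds s, 4 * r * exp (s' + t) < Afun a r β t s' :=
    (isOpen_lt (f := fun s' => 4 * r * exp (s' + t)) (by fun_prop)
      (by unfold Afun; fun_prop)).mem_nhds h
  have hinner : (fun s' => deriv (fun t' => phi a r β t' s') t) =ᶠ[nhds s]
      fun s' => phiNum a r β t s' / √(phiDisc a r β t s') :=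
    hnear.mono fun s' hs' => (hasDerivAt_phi_fst hr hs').deriv
  rw [hinner.deriv_eq, ((hasDerivAt_phiNum_snd a r β t s).div_sqrt
    (hasDerivAt_phiDisc_snd a r β t s) (phiDisc_pos hr h)).deriv]
  congr 1
  rw [phiNum, phiDisc, Afun, d1_sq, d2_sq, exp_add]
  ring

/-- Explicit formula for `φ''_st` (formula (3.2) of the paper). -/
theorem mixed_derivative_phi_formula (a r β t s : ℝ) (ha : 0 ≤ a) (hr : 0 < r)
    (hβ : β ∈ Set.Ioc 0 (π / 2))
    (h : 4 * r * Real.exp (s + t) < Afun a r β t s) :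
    deriv (fun s' => deriv (fun t' => phi a r β t' s') t) s =
      16 * r * Real.exp (2 * s + 2 * t) *
          ((a * Real.cos β - r) * (Real.exp (2 * s + 2 * t) + d2 a r β ^ 2) +
            (a * Real.cos β + r) * (Real.exp (2 * t) + d1 a r β ^ 2 * Real.exp (2 * s))) /
        (Afun a r β t s ^ 2 - 16 * r ^ 2 * Real.exp (2 * s + 2 * t)) ^ ((3 : ℝ) / 2) :=
  mixed_derivative_phi_formula_general a r β t s hr h

end
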